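/- Let ι be a nonempty finite type, let λ : ι → ℝ satisfy λ a > 0 for all a, and set Λ = Σ_a λ a. Let μ be the product over a ∈ ι of the exponential distributions with rates λ a, a measure on functions ι → ℝ. Then for every v ∈ ι and every w ≥ 0, μ({f : f v < w and f v < f a for all a ≠ v}) = (λ v / Λ) · (1 − exp(−w·Λ)). -/

import Mathlib

/-!
Split off the clock of `v`: by Fubini, the probability is `∫_{t < w} ∏_{a ≠ v} P(T_a > t) dP_v(t)`.
For `t ≥ 0` the survival functions multiply to `exp (-(Λ - λ v) t)`, and multiplied by the
density `λ v exp (-λ v t)` of `T_v` this is `λ v / Λ` times the exponential density of rate `Λ`,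
whose integral up to `w` is `1 - exp (-Λ w)`.
-/

open MeasureTheory ProbabilityTheory Set Real

namespace MeasurableEquiv

variable {ι : Type*} [DecidableEq ι] (i : ι) (β : ι → Type*) [∀ j, MeasurableSpace (β j)]

@[simps!]
def piSplitAt : (∀ j, β j) ≃ᵐ β i × ∀ j : {j // j ≠ i}, β j where
  toEquiv := Equiv.piSplitAt i β
  measurable_toFun :=
    (measurable_pi_apply i).prodMk (measurable_pi_lambda _ fun j => measurable_pi_apply j.1)
  measurable_invFun := by
    refine measurable_pi_lambda _ fun j => ?_
    by_cases h : j = i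
    · subst h
      simpa [Equiv.piSplitAt] using measurable_fst
    · simp only [Equiv.piSplitAt, Equiv.coe_fn_symm_mk, dif_neg h]
      exact (measurable_pi_apply _).comp measurable_snd

end MeasurableEquiv

namespace MeasureTheory

theorem measurePreserving_piSplitAt {ι : Type*} [Fintype ι] [DecidableEq ι] {β : ι → Type*}
    [∀ j, MeasurableSpace (β j)] (μ : ∀ j, Measure (β j)) [∀ j, SigmaFinite (μ j)] (i : ι) :
    MeasurePreserving (MeasurableEquiv.piSplitAt i β) (Measure.pi μ)
      ((μ i).prod (Measure.pi fun j : {j // j ≠ i} => μ j)) := by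
  set e := (MeasurableEquiv.piSplitAt i β).symm
  refine MeasurePreserving.symm e ⟨e.measurable, (Measure.pi_eq fun s _ => ?_).symm⟩
  have : e ⁻¹' Set.pi univ s = s i ×ˢ Set.pi univ fun j : {j // j ≠ i} => s j := by
    ext x
    simp only [e, MeasurableEquiv.piSplitAt_symm_apply, mem_preimage, mem_pi, mem_univ,
      true_imp_iff, mem_prod]
    refine ⟨fun hx => ⟨by simpa using hx i, fun j => by simpa [j.2] using hx j⟩, fun hx j => ?_⟩
    by_cases hj : j = i
    · subst hj
      simpa using hx.1
    · simpa [hj] using hx.2 ⟨j, hj⟩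
  rw [e.map_apply, this, Measure.prod_prod, Measure.pi_pi, Fintype.prod_eq_mul_prod_subtype_ne _ i]

theorem Measure.pi_setOf_mem_and_lt_forall_ne {ι : Type*} [Fintype ι] [DecidableEq ι]
    (μ : ι → Measure ℝ) [∀ a, SigmaFinite (μ a)] (v : ι) {s : Set ℝ} (hs : MeasurableSet s) :
    Measure.pi μ {f | f v ∈ s ∧ ∀ a, a ≠ v → f v < f a} =
      ∫⁻ t in s, ∏ a : {a // a ≠ v}, μ a (Ioi t) ∂μ v := by
  set S : Set (ℝ × ({a // a ≠ v} → ℝ)) := {p | p.1 ∈ s ∧ ∀ a, p.1 < p.2 a}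
  have hS : MeasurableSet S := by
    simp only [S, ofPred_and, ofPred_forall]
    exact (measurable_fst hs).inter <|
      .iInter fun a => measurableSet_lt measurable_fst (by fun_prop)
  have hpre : {f : ι → ℝ | f v ∈ s ∧ ∀ a, a ≠ v → f v < f a} =
      MeasurableEquiv.piSplitAt v (fun _ => ℝ) ⁻¹' S := by
    ext f
    simp [S]
  rw [hpre, (measurePreserving_piSplitAt μ v).measure_preimage hS.nullMeasurableSet,
    Measure.prod_apply hS, ← lintegral_indicator hs]
  refine lintegral_congr fun t => ?_
  by_cases ht : t ∈ s
  · have : Prod.mk t ⁻¹' S = Set.pi univ fun _ => Ioi t := by ext; simp [S, ht]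
    rw [indicator_of_mem ht, this, Measure.pi_pi]
  · have : Prod.mk t ⁻¹' S = ∅ := by ext; simp [S, ht]
    rw [indicator_of_notMem ht, this, measure_empty]

end MeasureTheory

namespace ProbabilityTheory

lemma expMeasure_eq_withDensity (r : ℝ) :
    expMeasure r = volume.withDensity (exponentialPDF r) := rfl

lemma measurable_exponentialPDF (r : ℝ) : Measurable (exponentialPDF r) :=
  (measurable_exponentialPDFReal r).ennreal_ofReal

lemma ae_nonneg_expMeasure (r : ℝ) : ∀ᵐ t ∂expMeasure r, 0 ≤ t := by
  refine ae_iff.2 ?_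
  simp only [not_le]
  change expMeasure r (Iio 0) = 0
  rw [expMeasure_eq_withDensity, withDensity_apply _ measurableSet_Iio]
  exact lintegral_exponentialPDF_of_nonpos le_rfl

lemma expMeasure_Ioi {r : ℝ} (hr : 0 < r) {t : ℝ} (ht : 0 ≤ t) :
    expMeasure r (Ioi t) = ENNReal.ofReal (exp (-(r * t))) := by
  have := isProbabilityMeasure_expMeasure hr
  have hIic : expMeasure r (Iic t) = ENNReal.ofReal (1 - exp (-(r * t))) := by
    rw [expMeasure_eq_withDensity, withDensity_apply _ measurableSet_Iic,
      lintegral_exponentialPDF_eq_antiDeriv hr, if_pos ht]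
  rw [← compl_Iic, prob_compl_eq_one_sub measurableSet_Iic, hIic, ← ENNReal.ofReal_one,
    ← ENNReal.ofReal_sub _ (sub_nonneg.2 (exp_le_one_iff.2 (neg_nonpos.2 (by positivity)))),
    sub_sub_cancel]

lemma prod_expMeasure_Ioi {κ : Type*} (u : Finset κ) {r : κ → ℝ} (hr : ∀ a, 0 < r a) {t : ℝ}
    (ht : 0 ≤ t) :
    ∏ a ∈ u, expMeasure (r a) (Ioi t) = ENNReal.ofReal (exp (-((∑ a ∈ u, r a) * t))) := by
  rw [Finset.prod_congr rfl fun a _ => expMeasure_Ioi (hr a) ht,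
    ← ENNReal.ofReal_prod_of_nonneg fun a _ => (exp_pos _).le, ← exp_sum, Finset.sum_mul,
    Finset.sum_neg_distrib]

lemma exponentialPDF_mul_exp_neg_mul {r c : ℝ} (hr : 0 ≤ r) (hrc : 0 < r + c) (t : ℝ) :
    exponentialPDF r t * ENNReal.ofReal (exp (-(c * t))) =
      ENNReal.ofReal (r / (r + c)) * exponentialPDF (r + c) t := by
  rcases lt_or_ge t 0 with ht | ht
  · simp [exponentialPDF_of_neg ht]
  rw [exponentialPDF_of_nonneg ht, exponentialPDF_of_nonneg ht,
    ← ENNReal.ofReal_mul (by positivity), ← ENNReal.ofReal_mul (by positivity)]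
  congr 1
  field_simp
  rw [mul_assoc, ← exp_add]
  ring_nf

lemma setLIntegral_Iio_expMeasure_exp_neg_mul {r c : ℝ} (hr : 0 ≤ r) (hrc : 0 < r + c) {w : ℝ}
    (hw : 0 ≤ w) :
    ∫⁻ t in Iio w, ENNReal.ofReal (exp (-(c * t))) ∂expMeasure r =
      ENNReal.ofReal (r / (r + c) * (1 - exp (-((r + c) * w)))) := by
  rw [expMeasure_eq_withDensity, setLIntegral_withDensity_eq_setLIntegral_mul _
    (measurable_exponentialPDF r) (by fun_prop) measurableSet_Iio]
  simp only [Pi.mul_apply, exponentialPDF_mul_exp_neg_mul hr hrc]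
  rw [lintegral_const_mul _ (measurable_exponentialPDF _),
    setLIntegral_congr Iio_ae_eq_Iic, lintegral_exponentialPDF_eq_antiDeriv hrc, if_pos hw,
    ← ENNReal.ofReal_mul (by positivity)]

end ProbabilityTheory

theorem exponential_argmin_min_joint_law_general
    (ι : Type) [Fintype ι]
    (lam : ι → ℝ) (hlam : ∀ a, 0 < lam a) (Λ : ℝ) (hΛ : Λ = ∑ a, lam a)
    (v : ι) (w : ℝ) (hw : 0 ≤ w) :
    (Measure.pi fun a : ι => expMeasure (lam a))
        {f : ι → ℝ | f v < w ∧ ∀ a : ι, a ≠ v → f v < f a} =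
      ENNReal.ofReal ((lam v / Λ) * (1 - Real.exp (-w * Λ))) := by
  classical
  have hrest : Λ - lam v = ∑ a : {a // a ≠ v}, lam a := by
    rw [hΛ, Fintype.sum_eq_add_sum_subtype_ne _ v, add_sub_cancel_left]
  have hΛpos : 0 < lam v + (Λ - lam v) := by
    rw [hrest]
    exact add_pos_of_pos_of_nonneg (hlam v) (Finset.sum_nonneg fun a _ => (hlam a).le)
  have (a : ι) : IsProbabilityMeasure (expMeasure (lam a)) :=
    isProbabilityMeasure_expMeasure (hlam a)
  calc _
      = ∫⁻ t in Iio w, ∏ a : {a // a ≠ v}, expMeasure (lam a) (Ioi t) ∂expMeasure (lam v) :=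
        Measure.pi_setOf_mem_and_lt_forall_ne _ v measurableSet_Iio
    _ = ∫⁻ t in Iio w, ENNReal.ofReal (exp (-((Λ - lam v) * t))) ∂expMeasure (lam v) := by
        refine setLIntegral_congr_fun_ae measurableSet_Iio ?_
        filter_upwards [ae_nonneg_expMeasure (lam v)] with t ht _
        rw [hrest, prod_expMeasure_Ioi (r := fun a : {a // a ≠ v} => lam a) _ (hlam ·) ht]
    _ = ENNReal.ofReal ((lam v / Λ) * (1 - Real.exp (-w * Λ))) := by
        rw [setLIntegral_Iio_expMeasure_exp_neg_mul (hlam v).le hΛpos hw, add_sub_cancel,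
          neg_mul, mul_comm w]

/-- **Joint law of the argmin and the minimum of independent exponential clocks.**
Let `λ a > 0` for `a` in a nonempty finite type `ι`, `Λ = ∑ a, λ a`, and let `μ` be the product
of the exponential distributions with rates `λ a`. Then for every `v : ι` and `w ≥ 0`, the
probability that the clock of `v` rings before time `w` and strictly before all other clocks is
`(λ v / Λ) * (1 - exp (-w * Λ))`. -/
theorem exponential_argmin_min_joint_law
    (ι : Type) [Fintype ι] [Nonempty ι]
    (lam : ι → ℝ) (hlam : ∀ a, 0 < lam a) (Λ : ℝ) (hΛ : Λ = ∑ a, lam a)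
    (v : ι) (w : ℝ) (hw : 0 ≤ w) :
    (Measure.pi fun a : ι => expMeasure (lam a))
        {f : ι → ℝ | f v < w ∧ ∀ a : ι, a ≠ v → f v < f a} =
      ENNReal.ofReal ((lam v / Λ) * (1 - Real.exp (-w * Λ))) :=
  exponential_argmin_min_joint_law_general ι lam hlam Λ hΛ v w hw
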